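/- arXiv:1408.5048 — 5 statements merged into one kernel-verified Lean document; each statement's English description precedes it below -/
import Mathlib

section
/- If α is a totally real algebraic integer with α ∉ {−1, 0, 1}, then log h(α) ≥ (1/2)·log((1+√5)/2), where h denotes the absolute Weil height. -/
open Polynomial

/-- The primitive integer polynomial associated to the minimal polynomial of `x` over `ℚ`. -/
noncomputable def intMinpoly (x : ℂ) : Polynomial ℤ :=
  IsLocalization.integerNormalization (nonZeroDivisors ℤ) (minpoly ℚ x)

/-- The (logarithmic) absolute Weil height of an algebraic number `x`, computed via the
Mahler measure of its integer minimal polynomial: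
`log h(x) = (1/deg x) * (log |a₀| + Σ_{roots z} log max(1,|z|))`.
This agrees with `Σ_v log max(1,|x|_v)` for the standard normalized absolute values. -/
noncomputable def logHeight (x : ℂ) : ℝ :=
  ((intMinpoly x).natDegree : ℝ)⁻¹ *
    (Real.log |((intMinpoly x).leadingCoeff : ℝ)| +
      (((intMinpoly x).aroots ℂ).map (fun z => Real.log (max 1 ‖z‖))).sum)

/-- An algebraic number is totally real if all of its conjugates over `ℚ` are real. -/
def IsTotallyReal (x : ℂ) : Prop :=
  IsAlgebraic ℚ x ∧ ∀ z ∈ (minpoly ℚ x).aroots ℂ, z.im = 0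

/-!
Every conjugate `x` of `α` is real and differs from `0, ±1`, so weighted AM-GM gives the
auxiliary inequality `log⁺ |x| ≥ ½ log φ + a log |x| + b log |x - 1| + b log |x + 1|` with
`a = (1 - 1/√5)/2`, `b = 1/(2√5)`. Summing over the roots of the integer minimal polynomial `P`,
each `∑ log |x - m|` for `m ∈ {0, ±1}` equals `log |P(m)| - log |lc P| ≥ -log |lc P|`, because
`P(m)` is a nonzero integer. Since `a + 2b ≤ 1` and `log |lc P| ≥ 0`, this yields
`(deg P / 2) log φ ≤ log |lc P| + ∑ log⁺ |x| = deg P · log h(α)`.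
-/

open Real goldenRatio

lemma weighted_log_le_log_add {w₁ w₂ a b : ℝ} (hw₁ : 0 ≤ w₁) (hw₂ : 0 ≤ w₂) (hw : w₁ + w₂ ≤ 1)
    (ha : 0 < a) (hb : 0 < b) :
    w₁ * log a + w₂ * log b ≤ log (w₁ * a + w₂ * b + (1 - w₁ - w₂)) := by
  have hamgm := geom_mean_le_arith_mean3_weighted (w₃ := 1 - w₁ - w₂) hw₁ hw₂ (by linarith)
    ha.le hb.le zero_le_one (by ring)
  rw [one_rpow, mul_one, mul_one] at hamgm
  have hlog := log_le_log (by positivity) hamgm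
  rwa [log_mul (by positivity) (by positivity), log_rpow ha, log_rpow hb] at hlog

lemma one_div_sqrt_five_lt_one : 1 / √5 < 1 := by
  rw [div_lt_one (by positivity), show (1 : ℝ) = √1 by simp]
  exact sqrt_lt_sqrt zero_le_one (by norm_num)

-- The weights `(1 - 1/√5)/2, 1/√5, (1 - 1/√5)/2` make the weighted arithmetic mean of
-- `t/φ², (t-1)/φ, 1` equal to `t/φ²`, and that of `φ²t, φ(1-t), 1` equal to `1`.
lemma log_goldenRatio_add_le_log_of_one_lt {t : ℝ} (ht : 1 < t) :
    log φ + (1 - 1 / √5) / 2 * log t + 1 / √5 * log (t - 1) ≤ log t := by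
  have hs2 : √5 ^ 2 = 5 := sq_sqrt (by norm_num)
  have hφ := goldenRatio_pos
  have key := weighted_log_le_log_add (w₁ := (1 - 1 / √5) / 2) (w₂ := 1 / √5) (a := t / φ ^ 2)
    (b := (t - 1) / φ) (by linarith [one_div_sqrt_five_lt_one]) (by positivity)
    (by linarith [one_div_sqrt_five_lt_one]) (by positivity)
    (div_pos (by linarith) hφ)
  have hmean : (1 - 1 / √5) / 2 * (t / φ ^ 2) + 1 / √5 * ((t - 1) / φ)
      + (1 - (1 - 1 / √5) / 2 - 1 / √5) = t / φ ^ 2 := by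
    unfold goldenRatio
    field_simp
    linear_combination (1 + √5) * hs2
  rw [hmean, log_div (x := t) (by positivity) (by positivity),
    log_div (x := t - 1) (by linarith) hφ.ne', log_pow] at key
  push_cast at key
  linarith

lemma log_goldenRatio_add_le_zero_of_lt_one {t : ℝ} (ht₀ : 0 < t) (ht₁ : t < 1) :
    log φ + (1 - 1 / √5) / 2 * log t + 1 / √5 * log (1 - t) ≤ 0 := by
  have hs2 : √5 ^ 2 = 5 := sq_sqrt (by norm_num)
  have hφ := goldenRatio_pos
  have key := weighted_log_le_log_add (w₁ := (1 - 1 / √5) / 2) (w₂ := 1 / √5) (a := φ ^ 2 * t)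
    (b := φ * (1 - t)) (by linarith [one_div_sqrt_five_lt_one]) (by positivity)
    (by linarith [one_div_sqrt_five_lt_one]) (by positivity)
    (mul_pos hφ (by linarith))
  have hmean : (1 - 1 / √5) / 2 * (φ ^ 2 * t) + 1 / √5 * (φ * (1 - t))
      + (1 - (1 - 1 / √5) / 2 - 1 / √5) = 1 := by
    unfold goldenRatio
    field_simp
    linear_combination t * (1 + √5) * hs2
  rw [hmean, log_mul (by positivity) ht₀.ne', log_mul hφ.ne' (by linarith), log_pow, log_one] at key
  push_cast at key
  linarith

lemma log_goldenRatio_div_two_add_le_log_max_one {x : ℝ} (h₀ : x ≠ 0) (h₁ : x ≠ 1)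
    (h₂ : x ≠ -1) :
    log φ / 2 + (1 - 1 / √5) / 2 * log |x| + 1 / √5 / 2 * log |x - 1|
      + 1 / √5 / 2 * log |x + 1| ≤ log (max 1 |x|) := by
  have hx : |x| ≠ 1 := fun h => (abs_eq zero_le_one).mp h |>.elim h₁ h₂
  have hlog_sq : log (|x| ^ 2) = 2 * log |x| := by rw [log_pow]; push_cast; ring
  have hlog_sub : log |x - 1| + log |x + 1| = log |x ^ 2 - 1| := by
    rw [← log_mul (abs_ne_zero.mpr (sub_ne_zero.mpr h₁)) (abs_ne_zero.mpr (by grind)), ← abs_mul]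
    ring_nf
  rcases hx.lt_or_gt with hlt | hgt
  · have key := log_goldenRatio_add_le_zero_of_lt_one (t := |x| ^ 2) (by positivity)
      (by nlinarith [abs_nonneg x])
    have habs : 1 - x ^ 2 = |x ^ 2 - 1| := by
      rw [abs_of_neg (by nlinarith [sq_abs x, abs_nonneg x])]; ring
    rw [hlog_sq, sq_abs, habs, ← hlog_sub] at key
    rw [max_eq_left hlt.le, log_one]
    linarith
  · have key := log_goldenRatio_add_le_log_of_one_lt (t := |x| ^ 2) (by nlinarith [abs_nonneg x])
    rw [hlog_sq, sq_abs, ← abs_of_pos (by nlinarith [sq_abs x, abs_nonneg x] : 0 < x ^ 2 - 1),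
      ← hlog_sub] at key
    rw [max_eq_right hgt.le]
    linarith

lemma log_norm_eval_eq_log_norm_leadingCoeff_add_sum (p : ℂ[X]) {x : ℂ} (hx : p.eval x ≠ 0) :
    log ‖p.eval x‖ = log ‖p.leadingCoeff‖ + (p.roots.map fun z => log ‖x - z‖).sum := by
  have hp : p ≠ 0 := by rintro rfl; simp at hx
  have hfactor : ∀ y ∈ p.roots.map fun z => ‖x - z‖, y ≠ 0 :=
    Multiset.forall_mem_map_iff.mpr fun z hz hxz => by
      rw [norm_eq_zero, sub_eq_zero] at hxz
      exact hx (hxz ▸ (mem_roots hp).mp hz)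
  have hnorm (s : Multiset ℂ) : ‖s.prod‖ = (s.map (‖·‖)).prod :=
    map_multiset_prod (normHom : ℂ →*₀ ℝ) s
  rw [(IsAlgClosed.splits p).eval_eq_prod_roots, norm_mul, hnorm, Multiset.map_map,
    Function.comp_def, log_mul (by simpa using hp) (Multiset.prod_ne_zero fun h => hfactor 0 h rfl),
    log_multiset_prod hfactor, Multiset.map_map]
  rfl

lemma neg_log_abs_leadingCoeff_le_sum_log_norm_sub {P : ℤ[X]} {m : ℤ} (hm : P.eval m ≠ 0) :
    -log |(P.leadingCoeff : ℝ)| ≤ ((P.aroots ℂ).map fun z => log ‖z - (m : ℂ)‖).sum := by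
  have key := log_norm_eval_eq_log_norm_leadingCoeff_add_sum (P.map (algebraMap ℤ ℂ))
    (x := (m : ℂ)) (by simpa using hm)
  have hint : 0 ≤ log |((P.eval m : ℤ) : ℝ)| := log_nonneg (by exact_mod_cast Int.one_le_abs hm)
  rw [eval_intCast_map, leadingCoeff_map_of_injective (RingHom.injective_int _)] at key
  simp_rw [norm_sub_rev (m : ℂ)] at key
  simp only [eq_intCast, Int.cast_id, Complex.norm_intCast] at key
  rw [aroots_def]
  linarith

lemma eval_eq_zero_of_intCast_mem_aroots {P : ℤ[X]} {m : ℤ} (hm : (m : ℂ) ∈ P.aroots ℂ) :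
    P.eval m = 0 := by
  have := (mem_aroots.mp hm).2
  rw [← eq_intCast (algebraMap ℤ ℂ), aeval_algebraMap_apply_eq_algebraMap_eval,
    eq_intCast, Int.cast_eq_zero] at this
  exact this

theorem natDegree_mul_le_log_abs_leadingCoeff_add_sum_log_max_one {P : ℤ[X]} {c a₀ a₁ a₂ : ℝ}
    (ha₀ : 0 ≤ a₀) (ha₁ : 0 ≤ a₁) (ha₂ : 0 ≤ a₂) (ha : a₀ + a₁ + a₂ ≤ 1)
    (hbound : ∀ x : ℝ, x ≠ 0 → x ≠ 1 → x ≠ -1 →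
      c + a₀ * log |x| + a₁ * log |x - 1| + a₂ * log |x + 1| ≤ log (max 1 |x|))
    (hreal : ∀ z ∈ P.aroots ℂ, z.im = 0)
    (h₀ : P.eval 0 ≠ 0) (h₁ : P.eval 1 ≠ 0) (h₂ : P.eval (-1) ≠ 0) :
    P.natDegree * c ≤
      log |(P.leadingCoeff : ℝ)| + ((P.aroots ℂ).map fun z => log (max 1 ‖z‖)).sum := by
  have hP : P ≠ 0 := by rintro rfl; simp at h₀
  have hcard : (P.aroots ℂ).card = P.natDegree := by
    rw [aroots_def, IsAlgClosed.card_roots_eq_natDegree,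
      natDegree_map_eq_of_injective (RingHom.injective_int _)]
  have hL : 0 ≤ log |(P.leadingCoeff : ℝ)| :=
    log_nonneg (by exact_mod_cast Int.one_le_abs (leadingCoeff_ne_zero.mpr hP))
  have hpoint : ∀ z ∈ P.aroots ℂ, c + a₀ * log ‖z - ((0 : ℤ) : ℂ)‖ + a₁ * log ‖z - ((1 : ℤ) : ℂ)‖
      + a₂ * log ‖z - ((-1 : ℤ) : ℂ)‖ ≤ log (max 1 ‖z‖) := by
    intro z hz
    obtain ⟨x, rfl⟩ : ∃ x : ℝ, (x : ℂ) = z := ⟨z.re, Complex.ext rfl (by simp [hreal z hz])⟩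
    have hne (m : ℤ) (hm : P.eval m ≠ 0) : x ≠ m := by
      rintro rfl
      exact hm (eval_eq_zero_of_intCast_mem_aroots (by simpa using hz))
    simp only [Int.cast_zero, Int.cast_one, Int.cast_neg, sub_zero, sub_neg_eq_add,
      ← Complex.ofReal_one, ← Complex.ofReal_sub, ← Complex.ofReal_add, Complex.norm_real,
      Real.norm_eq_abs]
    exact hbound x (by simpa using hne 0 h₀) (by simpa using hne 1 h₁) (by simpa using hne (-1) h₂)
  have hsum := Multiset.sum_map_le_sum_map _ _ hpoint
  simp only [Multiset.sum_map_add, Multiset.map_const', Multiset.sum_replicate, hcard,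
    nsmul_eq_mul, Multiset.sum_map_mul_left] at hsum
  have e₀ := mul_le_mul_of_nonneg_left (neg_log_abs_leadingCoeff_le_sum_log_norm_sub h₀) ha₀
  have e₁ := mul_le_mul_of_nonneg_left (neg_log_abs_leadingCoeff_le_sum_log_norm_sub h₁) ha₁
  have e₂ := mul_le_mul_of_nonneg_left (neg_log_abs_leadingCoeff_le_sum_log_norm_sub h₂) ha₂
  have hweight := mul_le_of_le_one_left hL ha
  linarith

lemma exists_intMinpoly_map_eq_smul (x : ℂ) :
    ∃ b : ℤ, b ≠ 0 ∧ (intMinpoly x).map (algebraMap ℤ ℚ) = (b : ℚ) • minpoly ℚ x := by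
  obtain ⟨b, hb, h⟩ := IsLocalization.integerNormalization_spec (nonZeroDivisors ℤ) (minpoly ℚ x)
  exact ⟨b, nonZeroDivisors.ne_zero hb, by rw [intMinpoly, h, Int.cast_smul_eq_zsmul]⟩

lemma aroots_intMinpoly (x : ℂ) : (intMinpoly x).aroots ℂ = (minpoly ℚ x).aroots ℂ := by
  obtain ⟨b, hb, h⟩ := exists_intMinpoly_map_eq_smul x
  rw [← aroots_map ℂ ℚ, h, aroots_smul_nonzero _ (Int.cast_ne_zero.mpr hb)]

lemma natDegree_intMinpoly (x : ℂ) : (intMinpoly x).natDegree = (minpoly ℚ x).natDegree := by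
  obtain ⟨b, hb, h⟩ := exists_intMinpoly_map_eq_smul x
  rw [← natDegree_map_eq_of_injective (algebraMap ℤ ℚ).injective_int, h, smul_eq_C_mul,
    natDegree_C_mul (Int.cast_ne_zero.mpr hb)]

lemma intMinpoly_eval_ne_zero {x : ℂ} (hx : IsIntegral ℚ x) {m : ℤ} (hm : (m : ℂ) ≠ x) :
    (intMinpoly x).eval m ≠ 0 := by
  obtain ⟨b, hb, h⟩ := exists_intMinpoly_map_eq_smul x
  intro h0
  have hroot : ((intMinpoly x).map (algebraMap ℤ ℚ)).eval (m : ℚ) = 0 := by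
    rw [eval_intCast_map, Int.cast_id, h0, map_zero]
  rw [h, eval_smul, smul_eq_zero] at hroot
  exact hm (by simpa using minpoly.root hx (hroot.resolve_left (Int.cast_ne_zero.mpr hb)))

theorem stmt_0_general (α : ℂ) (htr : IsTotallyReal α)
    (hne : α ∉ ({-1, 0, 1} : Set ℂ)) :
    logHeight α ≥ (1 / 2) * Real.log ((1 + Real.sqrt 5) / 2) := by
  have hα : IsIntegral ℚ α := htr.1.isIntegral
  simp only [Set.mem_insert_iff, Set.mem_singleton_iff, not_or] at hne
  obtain ⟨hα₂, hα₀, hα₁⟩ := hne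
  have hdeg : 0 < (intMinpoly α).natDegree := natDegree_intMinpoly α ▸ minpoly.natDegree_pos hα
  have key := natDegree_mul_le_log_abs_leadingCoeff_add_sum_log_max_one
    (by linarith [one_div_sqrt_five_lt_one]) (by positivity) (by positivity)
    (by linarith [one_div_sqrt_five_lt_one])
    (fun _ => log_goldenRatio_div_two_add_le_log_max_one)
    (by rw [aroots_intMinpoly]; exact htr.2)
    (intMinpoly_eval_ne_zero hα (m := 0) (by simpa using Ne.symm hα₀))
    (intMinpoly_eval_ne_zero hα (m := 1) (by simpa using Ne.symm hα₁))
    (intMinpoly_eval_ne_zero hα (m := -1) (by simpa using Ne.symm hα₂))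
  rw [logHeight, ge_iff_le, le_inv_mul_iff₀ (by exact_mod_cast hdeg)]
  linarith

/-- If `α` is a totally real algebraic integer with `α ∉ {-1,0,1}`, then
`log h(α) ≥ (1/2)·log((1+√5)/2)`. -/
theorem stmt_0 (α : ℂ) (hint : IsIntegral ℤ α) (htr : IsTotallyReal α)
    (hne : α ∉ ({-1, 0, 1} : Set ℂ)) :
    logHeight α ≥ (1 / 2) * Real.log ((1 + Real.sqrt 5) / 2) :=
  stmt_0_general α htr hne
end

section
/- Let α, β, γ > 0. The function f(u,v) = u·log(γu/(u+v)) + v·log(v/(u+v)), minimized over u, v ≥ 0 subject to αu + βv = 1, attains a unique minimum value l, and e^{−l} is the unique real root larger than 1 of the equation γ^{−1}·x^{−α} + x^{−β} = 1. -/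
/-!
In the variable `t = -log x` the root equation reads `γ⁻¹ e^{αt} + e^{βt} = 1`; its left side
increases strictly from `0` to `∞`, so there is exactly one root `l`. Put `p = γ⁻¹ e^{αl}` and
`q = e^{βl}`, so that `p + q = 1`. Writing `s = u + v`, Gibbs' inequality
`u log (u / (s p)) + v log (v / (s q)) ≥ 0` turns into `f(u,v) ≥ (αu + βv) l = l`, with equality
when `(u, v)` is proportional to `(p, q)`.
-/

open Real Filter Topology

/-- The left side of the root equation, in the variable `t = -log x`. -/
noncomputable def rootFn (α β γ t : ℝ) : ℝ := γ⁻¹ * exp (α * t) + exp (β * t)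

noncomputable def objective (γ u v : ℝ) : ℝ := u * log (γ * u / (u + v)) + v * log (v / (u + v))

theorem sub_le_mul_log_div {u c : ℝ} (hu : 0 ≤ u) (hc : 0 < c) : u - c ≤ u * log (u / c) := by
  rcases hu.eq_or_lt with rfl | hu
  · simpa using hc.le
  · calc u - c = u * (1 - (u / c)⁻¹) := by field_simp
      _ ≤ u * log (u / c) := by gcongr; exact one_sub_inv_le_log_of_pos (div_pos hu hc)

theorem mul_log_add_sub_le_mul_log {u s k r : ℝ} (hu : 0 ≤ u) (hs : 0 < s) (hk : 0 < k)
    (hr : 0 < r) : u * log (k * r) + (u - s * r) ≤ u * log (k * u / s) := by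
  rcases hu.eq_or_lt with rfl | hu
  · simpa using (mul_pos hs hr).le
  · have hsplit : log (k * u / s) = log (u / (s * r)) + log (k * r) := by
      rw [← log_mul (by positivity) (by positivity)]; field_simp
    rw [hsplit, mul_add]
    linarith [sub_le_mul_log_div hu.le (mul_pos hs hr)]

theorem rpow_neg_eq_exp_mul_neg_log {x : ℝ} (hx : 0 < x) (a : ℝ) :
    x ^ (-a) = exp (a * -log x) := by
  rw [rpow_def_of_pos hx]; ring_nf

section

variable {α β γ : ℝ}

theorem rootFn_neg_log {x : ℝ} (hx : 0 < x) :
    rootFn α β γ (-log x) = γ⁻¹ * x ^ (-α) + x ^ (-β) := by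
  rw [rootFn, rpow_neg_eq_exp_mul_neg_log hx, rpow_neg_eq_exp_mul_neg_log hx]

theorem continuous_rootFn : Continuous (rootFn α β γ) := by
  unfold rootFn; fun_prop

theorem strictMono_rootFn (hα : 0 < α) (hβ : 0 < β) (hγ : 0 < γ) :
    StrictMono (rootFn α β γ) := by
  intro a b hab
  have := inv_pos.2 hγ
  unfold rootFn
  gcongr

theorem tendsto_rootFn_atBot (hα : 0 < α) (hβ : 0 < β) :
    Tendsto (rootFn α β γ) atBot (𝓝 0) := by
  have hA := tendsto_exp_atBot.comp (tendsto_id.const_mul_atBot hα)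
  have hB := tendsto_exp_atBot.comp (tendsto_id.const_mul_atBot hβ)
  unfold rootFn
  simpa using (hA.const_mul γ⁻¹).add hB

theorem exists_rootFn_eq_one (hα : 0 < α) (hβ : 0 < β) (hγ : 0 < γ) :
    ∃ l, rootFn α β γ l = 1 := by
  obtain ⟨a, ha, ha0⟩ := (((tendsto_rootFn_atBot hα hβ).eventually (gt_mem_nhds one_pos)).and
    (eventually_le_atBot 0)).exists
  have h0 : 1 ≤ rootFn α β γ 0 := by simp [rootFn]; positivity
  obtain ⟨l, -, hl⟩ := intermediate_value_Icc ha0 continuous_rootFn.continuousOn ⟨ha.le, h0⟩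
  exact ⟨l, hl⟩

variable {l : ℝ}

theorem le_objective (hγ : 0 < γ) (hl : rootFn α β γ l = 1)
    {u v : ℝ} (hu : 0 ≤ u) (hv : 0 ≤ v) (huv : α * u + β * v = 1) : l ≤ objective γ u v := by
  have hs : 0 < u + v := by
    by_contra! h
    obtain ⟨rfl, rfl⟩ : u = 0 ∧ v = 0 := ⟨by linarith, by linarith⟩
    simp at huv
  have hA := mul_log_add_sub_le_mul_log (r := γ⁻¹ * exp (α * l)) hu hs hγ (by positivity)
  have hB := mul_log_add_sub_le_mul_log (r := exp (β * l)) hv hs one_pos (by positivity)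
  rw [mul_inv_cancel_left₀ hγ.ne', log_exp] at hA
  rw [one_mul, one_mul, log_exp] at hB
  unfold rootFn at hl
  unfold objective
  linear_combination hA + hB - l * huv + (u + v) * hl

theorem objective_div_eq (hα : 0 < α) (hβ : 0 < β) {p q : ℝ} (hp : 0 < p) (hq : 0 < q)
    (hpq : p + q = 1) (hγp : γ * p = exp (α * l)) (hβq : q = exp (β * l)) :
    objective γ (p / (α * p + β * q)) (q / (α * p + β * q)) = l := by
  have hD : 0 < α * p + β * q := by positivity
  have hu : γ * (p / (α * p + β * q)) / (1 / (α * p + β * q)) = exp (α * l) := by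
    rw [← hγp]; field_simp
  have hlogq : log q = β * l := by rw [hβq, log_exp]
  have hv : q / (α * p + β * q) / (1 / (α * p + β * q)) = q := by field_simp
  rw [objective, ← add_div, hpq, hu, hv, log_exp, hlogq]
  field_simp

theorem isLeast_objective (hα : 0 < α) (hβ : 0 < β) (hγ : 0 < γ) (hl : rootFn α β γ l = 1) :
    IsLeast {t | ∃ u v : ℝ, 0 ≤ u ∧ 0 ≤ v ∧ α * u + β * v = 1 ∧ t = objective γ u v} l := by
  set p := γ⁻¹ * exp (α * l)
  set q := exp (β * l)
  have hD : 0 < α * p + β * q := by positivity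
  have hval := objective_div_eq hα hβ (p := p) (q := q) (by positivity) (by positivity) hl
    (mul_inv_cancel_left₀ hγ.ne' _) rfl
  refine ⟨⟨_, _, by positivity, by positivity, by field_simp, hval.symm⟩, ?_⟩
  rintro t ⟨u, v, hu, hv, huv, rfl⟩
  exact le_objective hγ hl hu hv huv

end

/-- Lemma 3.3 of Beukers–Zagier: for `α, β, γ > 0`, the function
`f(u,v) = u·log(γu/(u+v)) + v·log(v/(u+v))` attains a unique minimum value `l` on the
constraint set `{u,v ≥ 0, αu + βv = 1}` (with the convention `0·log 0 = 0`, which is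
Lean's convention for `Real.log`), and `e^(-l)` is the unique real root larger
than `1` of `γ⁻¹·x^(-α) + x^(-β) = 1`. -/
theorem stmt_4 (α β γ : ℝ) (hα : 0 < α) (hβ : 0 < β) (hγ : 0 < γ) :
    ∃ l : ℝ,
      IsLeast
        {t : ℝ | ∃ u v : ℝ, 0 ≤ u ∧ 0 ≤ v ∧ α * u + β * v = 1 ∧
          t = u * Real.log (γ * u / (u + v)) + v * Real.log (v / (u + v))} l ∧
      (∀ x : ℝ, 1 < x →
        (γ⁻¹ * x ^ (-α) + x ^ (-β) = 1 ↔ x = Real.exp (-l))) := by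
  obtain ⟨l, hl⟩ := exists_rootFn_eq_one hα hβ hγ
  refine ⟨l, isLeast_objective hα hβ hγ hl, fun x hx => ?_⟩
  have hx0 : 0 < x := by linarith
  calc γ⁻¹ * x ^ (-α) + x ^ (-β) = 1 ↔ rootFn α β γ (-log x) = rootFn α β γ l := by
        rw [rootFn_neg_log hx0, hl]
    _ ↔ -log x = l := (strictMono_rootFn hα hβ hγ).injective.eq_iff
    _ ↔ x = exp (-l) := by rw [neg_eq_iff_eq_neg, ← exp_eq_exp, exp_log hx0]
end

section
/- For fixed b > 0, c > 0, if a ≥ a' > 0 then b·log(2bc/(a+2b)) + (a/2)·log(a/(a+2b)) ≤ b·log(2bc/(a'+2b)) + (a'/2)·log(a'/(a'+2b)). -/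
/-- For fixed `b, c > 0`, the quantity `b·log(2bc/(a+2b)) + (a/2)·log(a/(a+2b))`
is nonincreasing as a function of `a > 0`. -/
theorem stmt_8 (b c a a' : ℝ) (hb : 0 < b) (hc : 0 < c) (ha' : 0 < a') (haa : a' ≤ a) :
    b * Real.log (2 * b * c / (a + 2 * b)) + a / 2 * Real.log (a / (a + 2 * b)) ≤
      b * Real.log (2 * b * c / (a' + 2 * b)) + a' / 2 * Real.log (a' / (a' + 2 * b)) := by
  set g : ℝ → ℝ := fun x =>
    b * Real.log (2 * b * c) - b * Real.log (x + 2 * b)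
      + x / 2 * (Real.log x - Real.log (x + 2 * b)) with hg
  have hderiv : ∀ x ∈ Set.Ioi (0 : ℝ),
      HasDerivAt g (-(b / (x + 2 * b)) + (1 / 2 * (Real.log x - Real.log (x + 2 * b))
        + x / 2 * (1 / x - 1 / (x + 2 * b)))) x := by
    intro x hx
    have hx0 : (0 : ℝ) < x := hx
    have hxb : (0 : ℝ) < x + 2 * b := by linarith
    have h1 : HasDerivAt (fun y : ℝ => Real.log (y + 2 * b)) (1 / (x + 2 * b)) x := by
      have := (Real.hasDerivAt_log hxb.ne').comp x
        ((hasDerivAt_id x).add_const (2 * b))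
      exact this.congr_deriv (by simp)
    have h2 : HasDerivAt Real.log (1 / x) x := by
      simpa [one_div] using Real.hasDerivAt_log hx0.ne'
    have h3 : HasDerivAt (fun y : ℝ => Real.log y - Real.log (y + 2 * b))
        (1 / x - 1 / (x + 2 * b)) x := h2.sub h1
    have h4 : HasDerivAt (fun y : ℝ => y / 2) (1 / 2) x := by
      simpa using (hasDerivAt_id x).div_const 2
    have h5 := h4.mul h3
    have h6 := ((h1.const_mul b).const_sub (b * Real.log (2 * b * c))).add h5
    exact h6.congr_deriv (by ring)
  have hanti : AntitoneOn g (Set.Ioi (0 : ℝ)) := by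
    apply antitoneOn_of_deriv_nonpos (convex_Ioi 0)
    · exact fun x hx => ((hderiv x hx).continuousAt).continuousWithinAt
    · intro x hx
      rw [interior_Ioi] at hx
      exact (hderiv x hx).differentiableAt.differentiableWithinAt
    · intro x hx
      rw [interior_Ioi] at hx
      have hx0 : (0 : ℝ) < x := hx
      have hxb : (0 : ℝ) < x + 2 * b := by linarith
      rw [(hderiv x hx).deriv]
      have hzero : -(b / (x + 2 * b)) + x / 2 * (1 / x - 1 / (x + 2 * b)) = 0 := by
        field_simp
        ring
      have hlog : Real.log x ≤ Real.log (x + 2 * b) :=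
        Real.log_le_log hx0 (by linarith)
      nlinarith [hzero]
  have hrw : ∀ x : ℝ, 0 < x →
      b * Real.log (2 * b * c / (x + 2 * b)) + x / 2 * Real.log (x / (x + 2 * b)) = g x := by
    intro x hx0
    have hxb : (0 : ℝ) < x + 2 * b := by linarith
    rw [Real.log_div (by positivity) hxb.ne', Real.log_div hx0.ne' hxb.ne']
    simp [hg]
    ring
  have ha : (0 : ℝ) < a := lt_of_lt_of_le ha' haa
  rw [hrw a ha, hrw a' ha']
  exact hanti (Set.mem_Ioi.mpr ha') (Set.mem_Ioi.mpr ha) haa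
end

section
/- Let x be a complex number with 0 < |x| ≤ 1, let F(T) = Σ_{m=0}^{d} s_m T^m be a polynomial whose coefficients s_m are real, and suppose F(\bar{x}) = 0. Then |x^d · F(x^{−1})| ≤ (Σ_{m=0}^{d} m·|s_m|)·(1 − |x|²). -/
/-!
Subtracting `F(x̄) = 0` termwise, `x^d F(x⁻¹) = Σ s_m x^d (x^{-m} - x̄^m)`, and since `x x̄ = |x|²`
each summand equals `s_m x^{d-m} (1 - |x|^{2m})`. With `|x| ≤ 1` its norm is at most
`|s_m| (1 - (|x|²)^m) ≤ m |s_m| (1 - |x|²)` by Bernoulli's inequality.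
-/

open Finset

lemma one_sub_pow_le_mul_one_sub {r : ℝ} (hr : -1 ≤ r) (m : ℕ) : 1 - r ^ m ≤ m * (1 - r) := by
  have := one_add_mul_le_pow (a := r - 1) (by linarith) m
  rw [add_sub_cancel] at this
  linarith

section RCLike

variable {𝕜 : Type*} [RCLike 𝕜]

open ComplexConjugate

lemma pow_mul_inv_pow_sub_conj_pow {x : 𝕜} (hx : x ≠ 0) {m d : ℕ} (hmd : m ≤ d) :
    x ^ d * (x⁻¹ ^ m - conj x ^ m) = x ^ (d - m) * ((1 - (‖x‖ ^ 2) ^ m : ℝ) : 𝕜) := by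
  have hd : x ^ d = x ^ (d - m) * x ^ m := by rw [← pow_add, Nat.sub_add_cancel hmd]
  rw [hd, mul_assoc, mul_sub, ← mul_pow, ← mul_pow, mul_inv_cancel₀ hx, RCLike.mul_conj]
  push_cast
  ring

lemma norm_pow_mul_inv_pow_sub_conj_pow_le {x : 𝕜} (hx0 : x ≠ 0) (hx1 : ‖x‖ ≤ 1) {m d : ℕ}
    (hmd : m ≤ d) : ‖x ^ d * (x⁻¹ ^ m - conj x ^ m)‖ ≤ m * (1 - ‖x‖ ^ 2) := by
  have hsq : ‖x‖ ^ 2 ≤ 1 := pow_le_one₀ (norm_nonneg x) hx1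
  have hsqm : (‖x‖ ^ 2) ^ m ≤ 1 := pow_le_one₀ (by positivity) hsq
  rw [pow_mul_inv_pow_sub_conj_pow hx0 hmd, norm_mul, norm_pow, RCLike.norm_ofReal,
    abs_of_nonneg (sub_nonneg.mpr hsqm)]
  calc ‖x‖ ^ (d - m) * (1 - (‖x‖ ^ 2) ^ m)
      ≤ 1 - (‖x‖ ^ 2) ^ m :=
        mul_le_of_le_one_left (sub_nonneg.mpr hsqm) (pow_le_one₀ (norm_nonneg x) hx1)
    _ ≤ m * (1 - ‖x‖ ^ 2) := one_sub_pow_le_mul_one_sub (by linarith [sq_nonneg ‖x‖]) m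

end RCLike

/-- Let `x ∈ ℂ` with `0 < |x| ≤ 1` and let `F(T) = Σ_{m=0}^d s_m T^m` be a polynomial
with real coefficients such that `F(conj x) = 0`. Then
`|x^d · F(x⁻¹)| ≤ (Σ_{m=0}^d m·|s_m|)·(1 - |x|²)`. -/
theorem stmt_14 (x : ℂ) (hx0 : x ≠ 0) (hx1 : ‖x‖ ≤ 1)
    (d : ℕ) (s : ℕ → ℝ)
    (hroot : ∑ m ∈ range (d + 1), (s m : ℂ) * (starRingEnd ℂ x) ^ m = 0) :
    ‖x ^ d * ∑ m ∈ range (d + 1), (s m : ℂ) * (x⁻¹) ^ m‖ ≤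
      (∑ m ∈ range (d + 1), (m : ℝ) * |s m|) * (1 - ‖x‖ ^ 2) := by
  have hsplit : x ^ d * ∑ m ∈ range (d + 1), (s m : ℂ) * (x⁻¹) ^ m =
      ∑ m ∈ range (d + 1), (s m : ℂ) * (x ^ d * ((x⁻¹) ^ m - starRingEnd ℂ x ^ m)) := by
    rw [← sub_zero (∑ m ∈ range (d + 1), (s m : ℂ) * (x⁻¹) ^ m), ← hroot, ← sum_sub_distrib,
      mul_sum]
    exact sum_congr rfl fun m _ => by ring
  rw [hsplit, sum_mul]
  refine (norm_sum_le _ _).trans (sum_le_sum fun m hm => ?_)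
  rw [norm_mul, Complex.norm_real, Real.norm_eq_abs, mul_comm (m : ℝ), mul_assoc]
  exact mul_le_mul_of_nonneg_left
    (norm_pow_mul_inv_pow_sub_conj_pow_le hx0 hx1 (Nat.lt_succ_iff.mp (mem_range.mp hm)))
    (abs_nonneg _)
end

section
/- Every totally real algebraic integer α with α ≠ 0 and α² ≠ 1 satisfies h(α)² ≥ (1+√5)/2, i.e. log h(α) ≥ (1/2)log((1+√5)/2). -/
open Polynomial

lemma key_quad (y : ℝ) (hy : 0 ≤ y) :
    ((1+Real.sqrt 5)/2) * ((1 - 1/Real.sqrt 5) * y + (1/Real.sqrt 5) * |y^2 - 1|)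
      ≤ (max 1 y)^2 := by
  have hs : Real.sqrt 5 ^ 2 = 5 := Real.sq_sqrt (by norm_num)
  have hs1 : 1 ≤ Real.sqrt 5 := by nlinarith [Real.sqrt_nonneg 5]
  have hs3 : Real.sqrt 5 ≤ 3 := by nlinarith [Real.sqrt_nonneg 5]
  have e : 1/Real.sqrt 5 = Real.sqrt 5/5 := by
    rw [div_eq_div_iff (by positivity) (by norm_num)]
    nlinarith
  rw [e]
  rcases le_total y 1 with h | h
  · rw [max_eq_left h, abs_of_nonpos (by nlinarith)]
    nlinarith [sq_nonneg (y - (Real.sqrt 5 - 1)/2)]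
  · rw [max_eq_right h, abs_of_nonneg (by nlinarith)]
    nlinarith [sq_nonneg (y - (Real.sqrt 5 + 1)/2),
      mul_nonneg (sub_nonneg.mpr hs3) (sq_nonneg (y - (Real.sqrt 5 + 1)/2))]

lemma key_ineq (x : ℝ) (hx : x ≠ 0) (hx1 : x^2 ≠ 1) :
    Real.log ((1+Real.sqrt 5)/2) + (1 - 1/Real.sqrt 5) * Real.log |x|
      + (1/Real.sqrt 5) * Real.log |x^2-1| ≤ 2 * Real.log (max 1 |x|) := by
  have hs : Real.sqrt 5 ^ 2 = 5 := Real.sq_sqrt (by norm_num)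
  have hs1 : 1 ≤ Real.sqrt 5 := by nlinarith [Real.sqrt_nonneg 5]
  have hphi : (0:ℝ) < (1+Real.sqrt 5)/2 := by linarith
  have hy : (0:ℝ) < |x| := abs_pos.mpr hx
  have hA : (0:ℝ) < |x^2-1| := abs_pos.mpr (sub_ne_zero.mpr hx1)
  have ht0 : (0:ℝ) ≤ 1 - 1/Real.sqrt 5 := by
    have : 1/Real.sqrt 5 ≤ 1 := by
      rw [div_le_one (by linarith)]; exact hs1
    linarith
  have ht1 : (0:ℝ) ≤ 1/Real.sqrt 5 := by positivity
  have hsum : (1 - 1/Real.sqrt 5) + 1/Real.sqrt 5 = 1 := by ring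
  have hgm := Real.geom_mean_le_arith_mean2_weighted ht0 ht1 hy.le hA.le hsum
  have hquad := key_quad (|x|) hy.le
  rw [show |x|^2 - 1 = x^2 - 1 by rw [sq_abs]] at hquad
  calc Real.log ((1+Real.sqrt 5)/2) + (1 - 1/Real.sqrt 5) * Real.log |x|
      + (1/Real.sqrt 5) * Real.log |x^2-1|
      = Real.log (((1+Real.sqrt 5)/2) * (|x| ^ (1 - 1/Real.sqrt 5) * |x^2-1| ^ (1/Real.sqrt 5))) := by
        rw [Real.log_mul hphi.ne' (by positivity), Real.log_mul (by positivity) (by positivity),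
          Real.log_rpow hy, Real.log_rpow hA]; ring
    _ ≤ Real.log ((max 1 |x|)^2) := by
        apply Real.log_le_log (by positivity)
        calc ((1+Real.sqrt 5)/2) * (|x| ^ (1 - 1/Real.sqrt 5) * |x^2-1| ^ (1/Real.sqrt 5))
            ≤ ((1+Real.sqrt 5)/2) * ((1 - 1/Real.sqrt 5) * |x| + (1/Real.sqrt 5) * |x^2-1|) :=
              mul_le_mul_of_nonneg_left hgm hphi.le
          _ ≤ (max 1 |x|)^2 := hquad
    _ = 2 * Real.log (max 1 |x|) := by
        rw [Real.log_pow]; norm_num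

lemma mlog_prod (s : Multiset ℂ) (h : ∀ z ∈ s, z ≠ 0) :
    Real.log (‖s.prod‖) = (s.map fun z => Real.log ‖z‖).sum := by
  induction s using Multiset.induction with
  | empty => simp
  | cons a s ih =>
    have ha : a ≠ 0 := h a (by simp)
    have hs : s.prod ≠ 0 := Multiset.prod_ne_zero (fun h0 => h 0 (by simp [h0]) rfl)
    simp only [Multiset.prod_cons, Multiset.map_cons, Multiset.sum_cons, norm_mul]
    rw [Real.log_mul (norm_ne_zero_iff.mpr ha) (norm_ne_zero_iff.mpr hs),
      ih (fun z hz => h z (by simp [hz]))]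

lemma msum_le (s : Multiset ℂ) (f g : ℂ → ℝ) (h : ∀ z ∈ s, f z ≤ g z) :
    (s.map f).sum ≤ (s.map g).sum := by
  induction s using Multiset.induction with
  | empty => simp
  | cons a s ih =>
    simp only [Multiset.map_cons, Multiset.sum_cons]
    exact add_le_add (h a (by simp)) (ih fun z hz => h z (by simp [hz]))

/-- Schinzel's bound as the `r = 1` case: every totally real algebraic integer `α`
with `α ≠ 0` and `α² ≠ 1` satisfies `log h(α) ≥ (1/2)·log((1+√5)/2)`,
i.e. `h(α)² ≥ (1+√5)/2`. -/
theorem stmt_15 (α : ℂ) (hint : IsIntegral ℤ α) (htr : IsTotallyReal α)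
    (h0 : α ≠ 0) (h1 : α ^ 2 ≠ 1) :
    logHeight α ≥ (1 / 2) * Real.log ((1 + Real.sqrt 5) / 2) := by
  classical
  have hQ : IsIntegral ℚ α := hint.tower_top
  set p : ℚ[X] := minpoly ℚ α with hp
  have pmonic : p.Monic := minpoly.monic hQ
  have pne : p ≠ 0 := pmonic.ne_zero
  set d := p.natDegree with hdd
  have hd : 0 < d := minpoly.natDegree_pos hQ
  set PZ : ℤ[X] := minpoly ℤ α with hPZ
  have hfrac : p = PZ.map (algebraMap ℤ ℚ) :=
    minpoly.isIntegrallyClosed_eq_field_fractions' ℚ hint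
  have coeff0 : p.coeff 0 = ((PZ.coeff 0 : ℤ) : ℚ) := by
    rw [hfrac, coeff_map]; simp
  have peval1 : p.eval 1 = ((PZ.eval 1 : ℤ) : ℚ) := by
    rw [hfrac, eval_one_map]; simp
  have pevalneg : p.eval (-1) = ((PZ.eval (-1) : ℤ) : ℚ) := by
    have h2 : ((-1 : ℚ)) = algebraMap ℤ ℚ (-1) := by simp
    rw [hfrac, h2, eval_map, eval₂_at_apply]; simp
  have hc0 : p.coeff 0 ≠ 0 := minpoly.coeff_zero_ne_zero hQ h0
  have hne1 : p.eval 1 ≠ 0 := by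
    intro h
    have hdvd : X - C (1:ℚ) ∣ p := dvd_iff_isRoot.mpr h
    have heq := eq_of_monic_of_associated (monic_X_sub_C (1:ℚ)) pmonic
      ((irreducible_X_sub_C (1:ℚ)).associated_of_dvd (minpoly.irreducible hQ) hdvd)
    have hroot := minpoly.aeval ℚ α
    rw [hp] at heq
    rw [← heq] at hroot
    simp only [map_sub, aeval_X, aeval_C] at hroot
    have hα : α = 1 := by
      have hone : algebraMap ℚ ℂ 1 = 1 := map_one _
      rw [hone] at hroot; linear_combination hroot
    exact h1 (by rw [hα]; ring)
  have hneneg : p.eval (-1) ≠ 0 := by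
    intro h
    have hdvd : X - C (-1:ℚ) ∣ p := dvd_iff_isRoot.mpr h
    have heq := eq_of_monic_of_associated (monic_X_sub_C (-1:ℚ)) pmonic
      ((irreducible_X_sub_C (-1:ℚ)).associated_of_dvd (minpoly.irreducible hQ) hdvd)
    have hroot := minpoly.aeval ℚ α
    rw [hp] at heq
    rw [← heq] at hroot
    simp only [map_sub, aeval_X, aeval_C] at hroot
    have hα : α = -1 := by
      have hone : algebraMap ℚ ℂ (-1) = -1 := by simp
      rw [hone] at hroot; linear_combination hroot
    exact h1 (by rw [hα]; ring)
  -- integer nonvanishing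
  have hZc0 : PZ.coeff 0 ≠ 0 := fun h => hc0 (by rw [coeff0, h]; simp)
  have hZ1 : PZ.eval 1 ≠ 0 := fun h => hne1 (by rw [peval1, h]; simp)
  have hZneg : PZ.eval (-1) ≠ 0 := fun h => hneneg (by rw [pevalneg, h]; simp)
  have habs_int : ∀ m : ℤ, m ≠ 0 → (1:ℝ) ≤ ‖((m : ℤ) : ℂ)‖ := by
    intro m hm
    rw [Complex.norm_intCast]
    exact_mod_cast Int.one_le_abs hm
  -- complex picture
  set P : ℂ[X] := p.map (algebraMap ℚ ℂ) with hPdef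
  have Pne : P ≠ 0 := (Polynomial.map_ne_zero_iff (algebraMap ℚ ℂ).injective).mpr pne
  have Pmonic : P.Monic := pmonic.map _
  have hsplits : P.Splits :=
    IsAlgClosed.splits P
  set S : Multiset ℂ := P.roots with hS
  have hcard : Multiset.card S = d := by
    rw [hS, splits_iff_card_roots.mp hsplits, hPdef,
      natDegree_map_eq_of_injective (algebraMap ℚ ℂ).injective]
  have hSaroots : p.aroots ℂ = S := rfl
  have hPeval1 : P.eval 1 = ((PZ.eval 1 : ℤ) : ℂ) := by
    rw [hPdef, eval_one_map, peval1]; simp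
  have hPevalneg : P.eval (-1) = ((PZ.eval (-1) : ℤ) : ℂ) := by
    have h2 : ((-1 : ℂ)) = algebraMap ℚ ℂ (-1) := by simp
    rw [hPdef, h2, eval_map, eval₂_at_apply, pevalneg]; simp
  have hPcoeff0 : P.coeff 0 = ((PZ.coeff 0 : ℤ) : ℂ) := by
    rw [hPdef, coeff_map, coeff0]; simp
  -- roots facts
  have hroots : ∀ z ∈ S, z ≠ 0 ∧ z ≠ 1 ∧ z ≠ -1 ∧ z.im = 0 := by
    intro z hz
    have hzr : P.eval z = 0 := (mem_roots'.mp hz).2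
    refine ⟨?_, ?_, ?_, htr.2 z (by rwa [hSaroots])⟩
    · rintro rfl
      rw [← coeff_zero_eq_eval_zero, hPcoeff0] at hzr
      exact hZc0 (by exact_mod_cast hzr)
    · rintro rfl
      rw [hPeval1] at hzr
      exact hZ1 (by exact_mod_cast hzr)
    · rintro rfl
      rw [hPevalneg] at hzr
      exact hZneg (by exact_mod_cast hzr)
  have hroots0 : ∀ z ∈ S, z ≠ 0 := fun z hz => (hroots z hz).1
  have hrootsq : ∀ z ∈ S, z^2 - 1 ≠ 0 := by
    intro z hz h
    obtain ⟨_, hz1, hzn, _⟩ := hroots z hz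
    have h' : (z - 1) * (z + 1) = 0 := by linear_combination h
    rcases mul_eq_zero.mp h' with h' | h'
    · exact hz1 (by linear_combination h')
    · exact hzn (by linear_combination h')
  -- product bounds
  have habs1 : (1:ℝ) ≤ ‖S.prod‖ := by
    have h := hsplits.coeff_zero_eq_prod_roots_of_monic Pmonic
    have habs : ‖P.coeff 0‖ = ‖S.prod‖ := by
      rw [h, norm_mul, norm_pow]
      simp [hS]
    rw [← habs, hPcoeff0]
    exact habs_int _ hZc0
  have hprodsq : (S.map fun z => z^2 - 1).prod = P.eval 1 * P.eval (-1) := by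
    have e1 := hsplits.eval_eq_prod_roots_of_monic Pmonic 1
    have e2 := hsplits.eval_eq_prod_roots_of_monic Pmonic (-1)
    calc (S.map fun z => z^2 - 1).prod
        = (S.map fun z => (1 - z) * (-1 - z)).prod := by
          congr 1; exact Multiset.map_congr rfl (fun z _ => by ring)
      _ = (S.map fun z => 1 - z).prod * (S.map fun z => -1 - z).prod :=
          Multiset.prod_map_mul
      _ = P.eval 1 * P.eval (-1) := by rw [e1, e2]
  have habs2 : (1:ℝ) ≤ ‖(S.map fun z => z^2 - 1).prod‖ := by
    rw [hprodsq, norm_mul, hPeval1, hPevalneg]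
    calc (1:ℝ) = 1 * 1 := by norm_num
      _ ≤ _ := mul_le_mul (habs_int _ hZ1) (habs_int _ hZneg) (by norm_num)
          ((habs_int _ hZ1).trans' (by norm_num))
  -- pointwise bound on roots
  have hkey : ∀ z ∈ S,
      (fun z => Real.log ((1+Real.sqrt 5)/2)
        + (1 - 1/Real.sqrt 5) * Real.log ‖z‖
        + (1/Real.sqrt 5) * Real.log (‖z^2 - 1‖)) z
      ≤ (fun z => 2 * Real.log (max 1 ‖z‖)) z := by
    intro z hz
    obtain ⟨hz0, hz1, hzn, him⟩ := hroots z hz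
    set x := z.re with hxdef
    have hzx : (x : ℂ) = z := Complex.ext (by simp [hxdef]) (by simp [him])
    have habsz : ‖z‖ = |x| := by rw [← hzx, Complex.norm_real, Real.norm_eq_abs]
    have habsq : ‖z^2 - 1‖ = |x^2 - 1| := by
      rw [← hzx, show ((x:ℂ)^2 - 1) = ((x^2 - 1 : ℝ) : ℂ) by push_cast; ring,
        Complex.norm_real, Real.norm_eq_abs]
    have hx0 : x ≠ 0 := fun h => hz0 (by rw [← hzx, h]; simp)
    have hx1 : x^2 ≠ 1 := by
      intro h
      have h' : (x - 1) * (x + 1) = 0 := by linear_combination h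
      rcases mul_eq_zero.mp h' with h' | h'
      · exact hz1 (by rw [← hzx, show x = 1 by linarith]; simp)
      · exact hzn (by rw [← hzx, show x = -1 by linarith]; simp)
    simp only [habsz, habsq]
    exact key_ineq x hx0 hx1
  have hsum := msum_le S _ _ hkey
  set T : ℝ := (S.map fun z => Real.log (max 1 ‖z‖)).sum with hT
  have hsum2 : (S.map fun z => 2 * Real.log (max 1 ‖z‖)).sum = 2 * T := by
    rw [hT]; exact Multiset.sum_map_mul_left
  have hsplit : (S.map fun z => Real.log ((1+Real.sqrt 5)/2)
        + (1 - 1/Real.sqrt 5) * Real.log ‖z‖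
        + (1/Real.sqrt 5) * Real.log (‖z^2 - 1‖)).sum
      = (d:ℝ) * Real.log ((1+Real.sqrt 5)/2)
        + (1 - 1/Real.sqrt 5) * Real.log (‖S.prod‖)
        + (1/Real.sqrt 5) * Real.log (‖((S.map fun z => z^2 - 1)).prod‖) := by
    rw [mlog_prod S hroots0]
    rw [mlog_prod _ (by
      intro w hw
      obtain ⟨z, hz, rfl⟩ := Multiset.mem_map.mp hw
      exact hrootsq z hz)]
    rw [Multiset.map_map]
    simp only [Multiset.sum_map_add, Function.comp]
    rw [Multiset.sum_map_mul_left, Multiset.sum_map_mul_left]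
    congr 1
    rw [Multiset.map_const', Multiset.sum_replicate, hcard, nsmul_eq_mul]
  rw [hsplit, hsum2] at hsum
  -- conclude the sum bound
  have hlog1 : 0 ≤ Real.log (‖S.prod‖) := Real.log_nonneg habs1
  have hlog2 : 0 ≤ Real.log (‖((S.map fun z => z^2 - 1)).prod‖) :=
    Real.log_nonneg habs2
  have hs : Real.sqrt 5 ^ 2 = 5 := Real.sq_sqrt (by norm_num)
  have hs1 : 1 ≤ Real.sqrt 5 := by nlinarith [Real.sqrt_nonneg 5]
  have ht0 : (0:ℝ) ≤ 1 - 1/Real.sqrt 5 := by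
    have : 1/Real.sqrt 5 ≤ 1 := by rw [div_le_one (by linarith)]; exact hs1
    linarith
  have ht1 : (0:ℝ) ≤ 1/Real.sqrt 5 := by positivity
  have hTbound : (d:ℝ) * Real.log ((1+Real.sqrt 5)/2) ≤ 2 * T := by
    nlinarith [mul_nonneg ht0 hlog1, mul_nonneg ht1 hlog2]
  -- relate intMinpoly to p
  obtain ⟨b, hb⟩ := IsLocalization.integerNormalization_map_to_map (nonZeroDivisors ℤ) p
  have hbz : (b : ℤ) ≠ 0 := nonZeroDivisors.coe_ne_zero b
  have hbne : ((b : ℤ) : ℚ) ≠ 0 := by exact_mod_cast hbz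
  have hinj : Function.Injective (algebraMap ℤ ℚ) := fun a c h => by
    have : (a : ℚ) = (c : ℚ) := by simpa using h
    exact_mod_cast this
  have hIdef : intMinpoly α = IsLocalization.integerNormalization (nonZeroDivisors ℤ) p := rfl
  have hb' : (intMinpoly α).map (algebraMap ℤ ℚ) = C ((b : ℤ) : ℚ) * p := by
    rw [hIdef, hb, zsmul_eq_mul, ← Polynomial.C_eq_intCast]
  have hIne : intMinpoly α ≠ 0 := fun h =>
    pne (IsFractionRing.integerNormalization_eq_zero_iff.mp (hIdef ▸ h))
  have ndeg : (intMinpoly α).natDegree = d := by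
    have h := natDegree_map_eq_of_injective hinj (intMinpoly α)
    rw [hb', natDegree_C_mul hbne] at h
    exact h.symm
  have hlc : (intMinpoly α).leadingCoeff ≠ 0 := leadingCoeff_ne_zero.mpr hIne
  have hloglc : 0 ≤ Real.log |((intMinpoly α).leadingCoeff : ℝ)| :=
    Real.log_nonneg (by exact_mod_cast Int.one_le_abs hlc)
  have haroots : (intMinpoly α).aroots ℂ = S := by
    rw [aroots_def, IsScalarTower.algebraMap_eq ℤ ℚ ℂ, ← Polynomial.map_map, hb',
      Polynomial.map_mul, Polynomial.map_C,
      roots_C_mul _ ((map_ne_zero_iff _ (algebraMap ℚ ℂ).injective).mpr hbne)]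
  -- finish
  have hphi : (0:ℝ) ≤ Real.log ((1+Real.sqrt 5)/2) := Real.log_nonneg (by nlinarith)
  have hdpos : (0:ℝ) < (d:ℝ) := by exact_mod_cast hd
  rw [ge_iff_le, logHeight, ndeg, haroots]
  have step : (1/2) * Real.log ((1+Real.sqrt 5)/2) ≤ (d:ℝ)⁻¹ * T := by
    rw [le_inv_mul_iff₀ hdpos]
    nlinarith
  calc (1/2) * Real.log ((1+Real.sqrt 5)/2) ≤ (d:ℝ)⁻¹ * T := step
    _ ≤ (d:ℝ)⁻¹ * (Real.log |((intMinpoly α).leadingCoeff : ℝ)| + T) := by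
        apply mul_le_mul_of_nonneg_left _ (by positivity)
        linarith
end
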